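/- arXiv:0907.3086 — 2 statements merged into one kernel-verified Lean document; each statement's English description precedes it below -/
import Mathlib

section
/- If a_1, …, a_m is a nontrivial cycle of T of length m (i.e., a_i ≠ 1 for all i), then m·log₂ 3 < S_m < m·log₂ 3 + m·log₂(1 + 1/(3·a_min)). -/
/-- The Collatz odd-step map: `T x = (3x+1)/2^{v₂(3x+1)}`. -/
def T (x : ℕ) : ℕ := (3 * x + 1) / 2 ^ (padicValNat 2 (3 * x + 1))

lemma T_spec (x : ℕ) : 2 ^ (padicValNat 2 (3 * x + 1)) * T x = 3 * x + 1 :=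
  Nat.mul_div_cancel' pow_padicValNat_dvd

lemma T_pos (x : ℕ) : 0 < T x :=
  Nat.div_pos (Nat.le_of_dvd (by omega) pow_padicValNat_dvd) (by positivity)

theorem stmt_4 (m : ℕ) (hm : 1 ≤ m) (a : ℕ → ℕ)
    (hpos : ∀ i, 1 ≤ i → i ≤ m → 0 < a i)
    (hodd : ∀ i, 1 ≤ i → i ≤ m → Odd (a i))
    (hstep : ∀ i, 1 ≤ i → i < m → a (i + 1) = T (a i))
    (hloop : T (a m) = a 1)
    (hnontriv : ∀ i, 1 ≤ i → i ≤ m → a i ≠ 1)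
    (S : ℕ → ℕ)
    (hS : ∀ r, S r = ∑ i ∈ Finset.Icc 1 r, padicValNat 2 (3 * a i + 1))
    (amin : ℕ)
    (hamin : amin = (Finset.Icc 1 m).inf' (Finset.nonempty_Icc.mpr hm) a) :
    (m : ℝ) * Real.logb 2 3 < (S m : ℝ) ∧
    (S m : ℝ) < (m : ℝ) * Real.logb 2 3
        + (m : ℝ) * Real.logb 2 (1 + 1 / (3 * (amin : ℝ))) := by
  classical
  -- telescoping identity
  have tele : ∀ r, 1 ≤ r → r ≤ m →
      (∏ i ∈ Finset.Icc 1 r, (3 * a i + 1)) * a 1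
        = 2 ^ (S r) * (∏ i ∈ Finset.Icc 1 r, a i) * T (a r) := by
    intro r h1 h2
    induction r, h1 using Nat.le_induction with
    | base =>
        simp only [Finset.Icc_self, Finset.prod_singleton, hS, Finset.sum_singleton]
        rw [mul_right_comm _ (a 1), T_spec]
    | succ n hn ih =>
        have hnm : n ≤ m := by omega
        have hIH := ih hnm
        have hprod : (∏ i ∈ Finset.Icc 1 (n+1), (3 * a i + 1))
            = (∏ i ∈ Finset.Icc 1 n, (3 * a i + 1)) * (3 * a (n+1) + 1) :=
          Finset.prod_Icc_succ_top (by omega) _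
        have haprod : (∏ i ∈ Finset.Icc 1 (n+1), a i)
            = (∏ i ∈ Finset.Icc 1 n, a i) * a (n+1) :=
          Finset.prod_Icc_succ_top (by omega) _
        have hSsucc : S (n+1) = S n + padicValNat 2 (3 * a (n+1) + 1) := by
          rw [hS, hS]; exact Finset.sum_Icc_succ_top (by omega) _
        have hTstep : T (a n) = a (n+1) := (hstep n hn (by omega)).symm
        calc (∏ i ∈ Finset.Icc 1 (n+1), (3 * a i + 1)) * a 1
            = ((∏ i ∈ Finset.Icc 1 n, (3 * a i + 1)) * a 1) * (3 * a (n+1) + 1) := by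
              rw [hprod]; ring
          _ = 2 ^ (S n) * (∏ i ∈ Finset.Icc 1 n, a i) * a (n+1)
                * (2 ^ (padicValNat 2 (3 * a (n+1) + 1)) * T (a (n+1))) := by
              rw [hIH, hTstep, T_spec]
          _ = 2 ^ (S (n+1)) * (∏ i ∈ Finset.Icc 1 (n+1), a i) * T (a (n+1)) := by
              rw [hSsucc, haprod, pow_add]; ring
  have ha1 : 0 < a 1 := hpos 1 le_rfl hm
  have hprodpos : 0 < ∏ i ∈ Finset.Icc 1 m, a i :=
    Finset.prod_pos fun i hi => by
      rw [Finset.mem_Icc] at hi; exact hpos i hi.1 hi.2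
  have key : (∏ i ∈ Finset.Icc 1 m, (3 * a i + 1))
      = 2 ^ (S m) * ∏ i ∈ Finset.Icc 1 m, a i := by
    have := tele m hm le_rfl
    rw [hloop] at this
    exact Nat.eq_of_mul_eq_mul_right ha1 this
  have hcard : (Finset.Icc 1 m).card = m := by
    rw [Nat.card_Icc]; omega
  -- lower bound in ℕ : 3^m < 2^(S m)
  have hlow : 3 ^ m < 2 ^ (S m) := by
    have h1 : (∏ i ∈ Finset.Icc 1 m, (3 * a i))
        < ∏ i ∈ Finset.Icc 1 m, (3 * a i + 1) := by
      apply Finset.prod_lt_prod_of_nonempty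
      · intro i hi
        rw [Finset.mem_Icc] at hi
        have := hpos i hi.1 hi.2; omega
      · intro i _; omega
      · exact Finset.nonempty_Icc.mpr hm
    have h2 : (∏ i ∈ Finset.Icc 1 m, (3 * a i))
        = 3 ^ m * ∏ i ∈ Finset.Icc 1 m, a i := by
      rw [Finset.prod_mul_distrib, Finset.prod_const, hcard]
    rw [h2, key] at h1
    exact Nat.lt_of_mul_lt_mul_right h1
  -- facts about amin
  obtain ⟨i0, hi0mem, hi0⟩ := Finset.exists_mem_eq_inf' (Finset.nonempty_Icc.mpr hm) a
  rw [Finset.mem_Icc] at hi0mem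
  have haminle : ∀ i ∈ Finset.Icc 1 m, amin ≤ a i := by
    intro i hi; rw [hamin]; exact Finset.inf'_le a hi
  have haminpos : 0 < amin := by
    rw [hamin, hi0]; exact hpos i0 hi0mem.1 hi0mem.2
  have haminne1 : amin ≠ 1 := by
    rw [hamin, hi0]; exact hnontriv i0 hi0mem.1 hi0mem.2
  -- some element strictly above amin
  have hexlt : ∃ i ∈ Finset.Icc 1 m, amin < a i := by
    by_contra h
    push_neg at h
    have hall : ∀ i ∈ Finset.Icc 1 m, a i = amin := fun i hi =>
      le_antisymm (h i hi) (haminle i hi)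
    have hm' : a m = amin := hall m (Finset.mem_Icc.mpr ⟨hm, le_rfl⟩)
    have h1' : a 1 = amin := hall 1 (Finset.mem_Icc.mpr ⟨le_rfl, hm⟩)
    have heq2 : 2 ^ (padicValNat 2 (3 * amin + 1)) * amin = 3 * amin + 1 := by
      have h := T_spec (a m)
      rw [hloop, h1', hm'] at h
      exact h
    have hdvd : amin ∣ 3 * amin + 1 := Dvd.intro_left _ heq2
    have hdvd1 : amin ∣ 1 := (Nat.dvd_add_right ⟨3, by ring⟩).mp hdvd
    exact haminne1 (Nat.dvd_one.mp hdvd1)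
  -- upper bound in ℕ : 2^(S m) * amin^m < (3*amin+1)^m
  have hup : 2 ^ (S m) * amin ^ m < (3 * amin + 1) ^ m := by
    have h1 : (∏ i ∈ Finset.Icc 1 m, ((3 * a i + 1) * amin))
        < ∏ i ∈ Finset.Icc 1 m, (a i * (3 * amin + 1)) := by
      apply Finset.prod_lt_prod
      · intro i hi; positivity
      · intro i hi
        have := haminle i hi
        nlinarith
      · obtain ⟨i, hi, hlt⟩ := hexlt
        exact ⟨i, hi, by nlinarith⟩
    rw [Finset.prod_mul_distrib, Finset.prod_mul_distrib, Finset.prod_const,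
      Finset.prod_const, hcard, key] at h1
    have h2 : (∏ i ∈ Finset.Icc 1 m, a i) * (2 ^ (S m) * amin ^ m)
        < (∏ i ∈ Finset.Icc 1 m, a i) * (3 * amin + 1) ^ m := by
      calc (∏ i ∈ Finset.Icc 1 m, a i) * (2 ^ (S m) * amin ^ m)
          = 2 ^ (S m) * (∏ i ∈ Finset.Icc 1 m, a i) * amin ^ m := by ring
        _ < (∏ i ∈ Finset.Icc 1 m, a i) * (3 * amin + 1) ^ m := h1
    exact Nat.lt_of_mul_lt_mul_left h2
  -- pass to reals
  have h2r : (1:ℝ) < 2 := one_lt_two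
  constructor
  · -- lower bound
    have hcast : ((3:ℝ)) ^ m < (2:ℝ) ^ (S m) := by
      exact_mod_cast hlow
    have := Real.logb_lt_logb h2r (by positivity) hcast
    rwa [Real.logb_pow, Real.logb_pow, Real.logb_self_eq_one (b := 2) (by norm_num),
      mul_one] at this
  · -- upper bound
    have hApos : (0:ℝ) < (amin:ℝ) := by exact_mod_cast haminpos
    set A : ℝ := (amin : ℝ) with hA
    have hcast : (2:ℝ) ^ (S m) * A ^ m < (3 * A + 1) ^ m := by
      rw [hA]; exact_mod_cast hup
    have hx : (0:ℝ) < (3 * A + 1) / A := by positivity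
    have h1 : (2:ℝ) ^ (S m) < ((3 * A + 1) / A) ^ m := by
      rw [div_pow, lt_div_iff₀ (by positivity)]
      exact hcast
    have h2 := Real.logb_lt_logb h2r (by positivity) h1
    rw [Real.logb_pow, Real.logb_pow, Real.logb_self_eq_one (b := 2) (by norm_num),
      mul_one] at h2
    have heq : (3 * A + 1) / A = 3 * (1 + 1 / (3 * A)) := by
      field_simp
    have hlogsplit : Real.logb 2 ((3 * A + 1) / A)
        = Real.logb 2 3 + Real.logb 2 (1 + 1 / (3 * A)) := by
      rw [heq, Real.logb_mul (by norm_num) (by positivity)]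
    rw [hlogsplit] at h2
    calc (S m : ℝ) < (m:ℝ) * (Real.logb 2 3 + Real.logb 2 (1 + 1 / (3 * A))) := h2
      _ = (m:ℝ) * Real.logb 2 3 + (m:ℝ) * Real.logb 2 (1 + 1 / (3 * A)) := by ring
end

section
/- If a_1, …, a_m is a nontrivial cycle of T of length m (i.e., a_i ≠ 1 for all i) with a_min ≥ 19·2^58, then m ≥ 6586818670. That is, any nontrivial cycle of the Collatz map contains at least 6,586,818,670 odd numbers. -/
open Real Finset

lemma prod_range_succ_eq_of_cyclic {M : Type*} [CommMonoid M] {f g : ℕ → M} {n : ℕ}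
    (hstep : ∀ i < n, f i = g (i + 1)) (hloop : f n = g 0) :
    ∏ i ∈ range (n + 1), f i = ∏ i ∈ range (n + 1), g i := by
  rw [prod_range_succ, prod_range_succ', hloop,
    prod_congr rfl fun i hi => hstep i (mem_range.mp hi)]

lemma T_mul_two_pow_padicValNat (x : ℕ) : T x * 2 ^ padicValNat 2 (3 * x + 1) = 3 * x + 1 :=
  Nat.div_mul_cancel pow_padicValNat_dvd

lemma prod_three_mul_add_one_of_cyclic {x : ℕ → ℕ} {n : ℕ}
    (hstep : ∀ i < n, T (x i) = x (i + 1)) (hloop : T (x n) = x 0) :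
    ∏ i ∈ range (n + 1), (3 * x i + 1) =
      (∏ i ∈ range (n + 1), x i) * 2 ^ ∑ i ∈ range (n + 1), padicValNat 2 (3 * x i + 1) := by
  rw [← prod_range_succ_eq_of_cyclic hstep hloop, ← prod_pow_eq_pow_sum, ← prod_mul_distrib]
  exact prod_congr rfl fun i _ => (T_mul_two_pow_padicValNat (x i)).symm

section

variable {ι : Type*} {s : Finset ι}

lemma prod_three_add_inv_eq_two_pow {x : ι → ℕ} (hx : ∀ i ∈ s, 0 < x i) {K : ℕ}
    (h : ∏ i ∈ s, (3 * x i + 1) = (∏ i ∈ s, x i) * 2 ^ K) :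
    ∏ i ∈ s, (3 + (x i : ℝ)⁻¹) = 2 ^ K := by
  have hx' : ∀ i ∈ s, (x i : ℝ) ≠ 0 := fun i hi => by exact_mod_cast (hx i hi).ne'
  have hP : ∏ i ∈ s, (x i : ℝ) ≠ 0 := prod_ne_zero_iff.mpr hx'
  have h' : ∏ i ∈ s, (3 * (x i : ℝ) + 1) = (∏ i ∈ s, (x i : ℝ)) * 2 ^ K := by exact_mod_cast h
  rw [prod_congr rfl fun i hi => (show 3 + (x i : ℝ)⁻¹ = (3 * x i + 1) / x i by
    field_simp [hx' i hi]), prod_div_distrib, h', mul_div_cancel_left₀ _ hP]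

lemma mul_log_two_eq_sum_log {x : ι → ℝ} (hx : ∀ i ∈ s, 0 < x i) {K : ℕ}
    (h : ∏ i ∈ s, (3 + (x i)⁻¹) = 2 ^ K) :
    K * log 2 = ∑ i ∈ s, log (3 + (x i)⁻¹) := by
  rw [← log_pow, ← h, log_prod fun i hi => by have := hx i hi; positivity]

lemma log_three_add_inv_le {x : ℝ} (hx : 0 < x) : log (3 + x⁻¹) ≤ log 3 + (3 * x)⁻¹ := by
  have h : 3 + x⁻¹ = 3 * (1 + (3 * x)⁻¹) := by field_simp
  rw [h, log_mul (by norm_num) (by positivity)]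
  linarith [log_le_sub_one_of_pos (show 0 < 1 + (3 * x)⁻¹ by positivity)]

lemma card_mul_log_three_lt_mul_log_two (hs : s.Nonempty) {x : ι → ℝ} (hx : ∀ i ∈ s, 0 < x i)
    {K : ℕ} (h : ∏ i ∈ s, (3 + (x i)⁻¹) = 2 ^ K) : #s * log 3 < K * log 2 := by
  rw [mul_log_two_eq_sum_log hx h, ← nsmul_eq_mul, ← sum_const]
  refine sum_lt_sum_of_nonempty hs fun i hi => log_lt_log (by norm_num) ?_
  linarith [inv_pos.mpr (hx i hi)]

lemma mul_log_two_le_card_mul {x : ι → ℝ} {A : ℝ} (hA : 0 < A) (hx : ∀ i ∈ s, A ≤ x i)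
    {K : ℕ} (h : ∏ i ∈ s, (3 + (x i)⁻¹) = 2 ^ K) : K * log 2 ≤ #s * (log 3 + (3 * A)⁻¹) := by
  have hx₀ : ∀ i ∈ s, 0 < x i := fun i hi => hA.trans_le (hx i hi)
  rw [mul_log_two_eq_sum_log hx₀ h, ← nsmul_eq_mul, ← sum_const]
  refine sum_le_sum fun i hi => (log_three_add_inv_le (hx₀ i hi)).trans ?_
  gcongr
  exact hx i hi

end

lemma abs_sum_sub_log_inv_one_sub_le {x : ℝ} (hx₀ : 0 ≤ x) (hx₁ : x < 1) (n : ℕ) :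
    |∑ i ∈ range n, x ^ (i + 1) / (i + 1) - log (1 - x)⁻¹| ≤ x ^ (n + 1) / (1 - x) := by
  have := abs_log_sub_add_sum_range_le (abs_lt.mpr ⟨by linarith, hx₁⟩) n
  rwa [abs_of_nonneg hx₀, ← sub_neg_eq_add, ← log_inv] at this

lemma log_three_div_log_two_bounds :
    9809721694 * log 2 < 6189245291 * log 3 ∧
      397573379 * (log 3 + (3 * (19 * 2 ^ 58))⁻¹) < 630138897 * log 2 := by
  have h₂ := abs_le.mp (abs_sum_sub_log_inv_one_sub_le (x := 2⁻¹) (by norm_num) (by norm_num) 70)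
  have h₃ := abs_le.mp (abs_sum_sub_log_inv_one_sub_le (x := 3⁻¹) (by norm_num) (by norm_num) 46)
  rw [show (1 - 3⁻¹ : ℝ)⁻¹ = 3 / 2 by norm_num, log_div (by norm_num) (by norm_num)] at h₃
  norm_num [sum_range_succ] at h₂ h₃
  constructor <;> linarith [h₂.1, h₂.2, h₃.1, h₃.2]

lemma mul_lt_mul_of_real_ratio {a b c d : ℕ} {x y : ℝ} (hy : 0 < y) (hc : 0 < c)
    (h₁ : a * y < b * x) (h₂ : c * x ≤ d * y) : a * c < b * d := by
  have hc' : (0 : ℝ) < c := by exact_mod_cast hc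
  have : (a * c : ℝ) * y < (b * d) * y := by
    calc (a * c : ℝ) * y = c * (a * y) := by ring
      _ < c * (b * x) := by gcongr
      _ = b * (c * x) := by ring
      _ ≤ b * (d * y) := by gcongr
      _ = (b * d) * y := by ring
  exact_mod_cast lt_of_mul_lt_mul_right this hy.le

lemma add_le_of_between_farey_neighbours {a b c d p q : ℕ} (hadj : a * d + 1 = b * c)
    (h₁ : a * q < b * p) (h₂ : d * p < c * q) : b + d ≤ q := by
  have hq : (q : ℤ) = b * (c * q - d * p) + d * (b * p - a * q) := by
    linear_combination (q : ℤ) * (by exact_mod_cast hadj : (a * d + 1 : ℤ) = b * c)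
  have h₁' : (1 : ℤ) ≤ b * p - a * q := by omega
  have h₂' : (1 : ℤ) ≤ c * q - d * p := by omega
  have : (b + d : ℤ) ≤ q := by nlinarith
  omega

theorem stmt_13_general (m : ℕ) (hm : 1 ≤ m) (a : ℕ → ℕ)
    (hstep : ∀ i, 1 ≤ i → i < m → a (i + 1) = T (a i))
    (hloop : T (a m) = a 1)
    (amin : ℕ)
    (hamin : amin = (Finset.Icc 1 m).inf' (Finset.nonempty_Icc.mpr hm) a)
    (hbig : 19 * 2 ^ 58 ≤ amin) :
    6586818670 ≤ m := by
  obtain ⟨n, rfl⟩ : ∃ n, m = n + 1 := ⟨m - 1, by omega⟩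
  set b : ℕ → ℕ := fun i => a (i + 1)
  have hb_ge : ∀ i ∈ range (n + 1), 19 * 2 ^ 58 ≤ b i := fun i hi =>
    hbig.trans (hamin ▸ inf'_le a (mem_Icc.mpr ⟨by omega, by simp at hi; omega⟩))
  have hb_ge' : ∀ i ∈ range (n + 1), (19 * 2 ^ 58 : ℝ) ≤ b i := fun i hi => by
    exact_mod_cast hb_ge i hi
  have hcycle := prod_three_mul_add_one_of_cyclic (x := b)
    (fun i _ => (hstep (i + 1) (by omega) (by omega)).symm) hloop
  have hprod := prod_three_add_inv_eq_two_pow (fun i hi => by have := hb_ge i hi; omega) hcycle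
  set K := ∑ i ∈ range (n + 1), padicValNat 2 (3 * b i + 1)
  have hK_lower := card_mul_log_three_lt_mul_log_two nonempty_range_add_one
    (fun i hi => lt_of_lt_of_le (by norm_num) (hb_ge' i hi)) hprod
  have hK_upper := mul_log_two_le_card_mul (by norm_num) hb_ge' hprod
  rw [card_range] at hK_lower hK_upper
  obtain ⟨hθ_lower, hθ_upper⟩ := log_three_div_log_two_bounds
  have h₁ : 9809721694 * (n + 1) < 6189245291 * K :=
    mul_lt_mul_of_real_ratio (log_pos one_lt_two) (by omega) hθ_lower hK_lower.le
  have h₂ : 397573379 * K < 630138897 * (n + 1) :=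
    mul_lt_mul_of_real_ratio (by positivity) (by omega) hθ_upper hK_upper
  exact add_le_of_between_farey_neighbours (by norm_num) h₁ h₂

theorem stmt_13 (m : ℕ) (hm : 1 ≤ m) (a : ℕ → ℕ)
    (hpos : ∀ i, 1 ≤ i → i ≤ m → 0 < a i)
    (hodd : ∀ i, 1 ≤ i → i ≤ m → Odd (a i))
    (hstep : ∀ i, 1 ≤ i → i < m → a (i + 1) = T (a i))
    (hloop : T (a m) = a 1)
    (hnontriv : ∀ i, 1 ≤ i → i ≤ m → a i ≠ 1)
    (amin : ℕ)
    (hamin : amin = (Finset.Icc 1 m).inf' (Finset.nonempty_Icc.mpr hm) a)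
    (hbig : 19 * 2 ^ 58 ≤ amin) :
    6586818670 ≤ m :=
  stmt_13_general m hm a hstep hloop amin hamin hbig
end
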